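/- For n > 2h+1, the total number of independent subsets q(n) of the h-th power of a cycle on n vertices satisfies q(n) = q(n-1) + q(n-h-1), where q(m) denotes the number of independent subsets of the h-th power of a cycle on m vertices. -/

import Mathlib

/-- Independent subsets of the h-th power of the path on n vertices:
subsets of {1,...,n} with all pairwise differences of distinct elements greater than h. -/
def pathSubsets (n h : ℕ) : Finset (Finset ℕ) :=
  (Finset.Icc 1 n).powerset.filter (fun S => ∀ i ∈ S, ∀ j ∈ S, i < j → i + h < j)

def pathCount (n h k : ℕ) : ℕ := ((pathSubsets n h).filter (fun S => S.card = k)).card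

def pathTotal (n h : ℕ) : ℕ := (pathSubsets n h).card

/-- Independent subsets of the h-th power of the cycle on n vertices:
subsets S of {1,...,n} with h < |i-j| < n-h for all distinct i,j ∈ S. -/
def cycleSubsets (n h : ℕ) : Finset (Finset ℕ) :=
  (Finset.Icc 1 n).powerset.filter
    (fun S => ∀ i ∈ S, ∀ j ∈ S, i < j → i + h < j ∧ j + h < n + i)

def cycleCount (n h k : ℕ) : ℕ := ((cycleSubsets n h).filter (fun S => S.card = k)).card

def cycleTotal (n h : ℕ) : ℕ := (cycleSubsets n h).card

/-- Number of edges of the Hasse diagram of independent subsets of Pₙ⁽ʰ⁾ ordered by inclusion. -/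
def pathEdges (n h : ℕ) : ℕ :=
  (((pathSubsets n h) ×ˢ (pathSubsets n h)).filter
    (fun p => p.1 ⊆ p.2 ∧ p.2.card = p.1.card + 1)).card

/-- Number of edges of the Hasse diagram of independent subsets of Cₙ⁽ʰ⁾ ordered by inclusion. -/
def cycleEdges (n h : ℕ) : ℕ :=
  (((cycleSubsets n h) ×ˢ (cycleSubsets n h)).filter
    (fun p => p.1 ⊆ p.2 ∧ p.2.card = p.1.card + 1)).card

/-!
An independent set of `C_{m+h}^{(h)}` avoiding the last `h` vertices `m+1, …, m+h` is exactly an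
independent set of `P_m^{(h)}`. Any other one contains exactly one of them, say `m+t`, and all its
remaining vertices lie in `[t+1, m-h-1+t]`; deleting `m+t` and shifting down by `t` gives an
independent set of `P_{m-h-1}^{(h)}`. Hence `q(m+h) = p(m) + h·p(m-h-1)`, and the path recurrence
`p(m+1) = p(m) + p(m-h)` (split on whether `m+1` is used) turns this into the cycle recurrence.
-/

open Finset

lemma mem_pathSubsets {m h : ℕ} {S : Finset ℕ} :
    S ∈ pathSubsets m h ↔
      (∀ x ∈ S, 1 ≤ x ∧ x ≤ m) ∧ ∀ i ∈ S, ∀ j ∈ S, i < j → i + h < j := by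
  simp [pathSubsets, subset_iff]

lemma mem_cycleSubsets {n h : ℕ} {S : Finset ℕ} :
    S ∈ cycleSubsets n h ↔
      (∀ x ∈ S, 1 ≤ x ∧ x ≤ n) ∧
        ∀ i ∈ S, ∀ j ∈ S, i < j → i + h < j ∧ j + h < n + i := by
  simp [cycleSubsets, subset_iff]

section PathRecurrence

variable (m h : ℕ)

lemma filter_not_mem_pathSubsets_succ :
    (pathSubsets (m + 1) h).filter (m + 1 ∉ ·) = pathSubsets m h := by
  ext S
  simp only [mem_filter, mem_pathSubsets]
  constructor
  · rintro ⟨⟨hbound, hgap⟩, hm⟩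
    refine ⟨fun x hx => ?_, hgap⟩
    have := hbound x hx
    have : x ≠ m + 1 := ne_of_mem_of_not_mem hx hm
    omega
  · rintro ⟨hbound, hgap⟩
    refine ⟨⟨fun x hx => ?_, hgap⟩, fun hm => ?_⟩
    · have := hbound x hx
      omega
    · have := hbound _ hm
      omega

lemma card_filter_mem_pathSubsets_succ :
    ((pathSubsets (m + 1) h).filter (m + 1 ∈ ·)).card = pathTotal (m - h) h := by
  refine card_nbij' (·.erase (m + 1)) (insert (m + 1)) ?_ ?_ ?_ ?_
  · intro S hS
    simp only [coe_filter, Set.mem_ofPred_eq, mem_pathSubsets] at hS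
    obtain ⟨⟨hbound, hgap⟩, hm⟩ := hS
    simp only [mem_coe, mem_pathSubsets, mem_erase]
    refine ⟨fun x ⟨hxm, hx⟩ => ?_, fun i hi j hj => hgap i hi.2 j hj.2⟩
    have := hbound x hx
    have := hgap x hx _ hm (by omega)
    omega
  · intro T hT
    simp only [mem_coe, mem_pathSubsets] at hT
    obtain ⟨hbound, hgap⟩ := hT
    simp only [coe_filter, Set.mem_ofPred_eq, mem_pathSubsets, mem_insert,
      forall_eq_or_imp]
    refine ⟨⟨⟨by omega, fun x hx => ?_⟩, ⟨by omega, fun j hj _ => ?_⟩,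
      fun i hi => ⟨?_, hgap i hi⟩⟩, .inl trivial⟩
    · have := hbound x hx
      omega
    · have := hbound j hj
      omega
    · have := hbound i hi
      omega
  · intro S hS
    exact insert_erase (mem_filter.1 hS).2
  · intro T hT
    refine erase_insert fun hm => ?_
    have := (mem_pathSubsets.1 hT).1 _ hm
    omega

theorem pathTotal_succ : pathTotal (m + 1) h = pathTotal m h + pathTotal (m - h) h := by
  rw [pathTotal, ← card_filter_add_card_filter_not (p := (m + 1 ∈ ·)),
    card_filter_mem_pathSubsets_succ, filter_not_mem_pathSubsets_succ, add_comm]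
  rfl

end PathRecurrence

section CycleDecomposition

variable (m h : ℕ)

lemma filter_forall_le_cycleSubsets :
    (cycleSubsets (m + h) h).filter (fun S => ∀ j ∈ S, j ≤ m) = pathSubsets m h := by
  ext S
  simp only [mem_filter, mem_cycleSubsets, mem_pathSubsets]
  constructor
  · rintro ⟨⟨hbound, hgap⟩, hle⟩
    exact ⟨fun x hx => ⟨(hbound x hx).1, hle x hx⟩,
      fun i hi j hj hij => (hgap i hi j hj hij).1⟩
  · rintro ⟨hbound, hgap⟩
    refine ⟨⟨fun x hx => ?_, fun i hi j hj hij => ⟨hgap i hi j hj hij, ?_⟩⟩,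
      fun x hx => (hbound x hx).2⟩
    · have := hbound x hx
      omega
    · have := hbound i hi
      have := hbound j hj
      omega

lemma insert_map_mem_cycleSubsets {t : ℕ} (ht : t ∈ Icc 1 h) {T : Finset ℕ}
    (hT : T ∈ pathSubsets (m - h - 1) h) :
    insert (m + t) (T.map (addRightEmbedding t)) ∈ cycleSubsets (m + h) h := by
  rw [mem_Icc] at ht
  obtain ⟨hbound, hgap⟩ := mem_pathSubsets.1 hT
  simp only [mem_cycleSubsets, mem_insert, mem_map, addRightEmbedding_apply,
    forall_eq_or_imp, forall_exists_index, and_imp, forall_apply_eq_imp_iff₂]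
  refine ⟨⟨by omega, fun x hx => ?_⟩, ⟨by omega, fun y hy _ => ?_⟩,
    fun x hx => ⟨fun _ => ?_, fun y hy hxy => ?_⟩⟩
  · have := hbound x hx
    omega
  · have := hbound y hy
    omega
  · have := hbound x hx
    omega
  · have := hbound x hx
    have := hbound y hy
    have := hgap x hx y hy (by omega)
    omega

lemma lt_of_mem_cycleSubsets_of_gt {S : Finset ℕ} (hS : S ∈ cycleSubsets (m + h) h)
    {j : ℕ} (hj : j ∈ S) (hmj : m < j) {x : ℕ} (hx : x ∈ S) (hxj : x ≠ j) :
    j - m < x ∧ x + h < j := by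
  obtain ⟨hbound, hgap⟩ := mem_cycleSubsets.1 hS
  have := hbound j hj
  have := hbound x hx
  rcases hxj.lt_or_gt with hlt | hgt
  · have := hgap x hx j hj hlt
    omega
  · have := hgap j hj x hx hgt
    omega

lemma exists_eq_insert_map_of_mem_cycleSubsets {S : Finset ℕ} (hS : S ∈ cycleSubsets (m + h) h)
    {j : ℕ} (hj : j ∈ S) (hmj : m < j) :
    ∃ T ∈ pathSubsets (m - h - 1) h, S = insert j (T.map (addRightEmbedding (j - m))) := by
  have hbetween {x} (hx : x ∈ S.erase j) : j - m < x ∧ x + h < j :=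
    lt_of_mem_cycleSubsets_of_gt m h hS hj hmj (mem_of_mem_erase hx) (ne_of_mem_erase hx)
  refine ⟨(S.erase j).image (· - (j - m)), ?_, ?_⟩
  · simp only [mem_pathSubsets, mem_image, forall_exists_index, and_imp,
      forall_apply_eq_imp_iff₂]
    refine ⟨fun x hx => ?_, fun x hx y hy hxy => ?_⟩
    · have := hbetween hx
      omega
    · have := hbetween hx
      have := hbetween hy
      have := ((mem_cycleSubsets.1 hS).2 x (mem_of_mem_erase hx) y
        (mem_of_mem_erase hy) (by omega)).1
      omega
  · have hshift :
        ((S.erase j).image (· - (j - m))).map (addRightEmbedding (j - m)) = S.erase j := by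
      rw [map_eq_image, image_image]
      conv_rhs => rw [← image_id (s := S.erase j)]
      refine image_congr fun x hx => ?_
      have := hbetween hx
      simp only [Function.comp_apply, addRightEmbedding_apply, id_eq]
      omega
    rw [hshift, insert_erase hj]

lemma lt_of_mem_map_pathSubsets {t : ℕ} (ht : t ≤ h) {T : Finset ℕ}
    (hT : T ∈ pathSubsets (m - h - 1) h) {y : ℕ} (hy : y ∈ T.map (addRightEmbedding t)) :
    y < m := by
  obtain ⟨x, hx, rfl⟩ := mem_map.1 hy
  have := (mem_pathSubsets.1 hT).1 x hx
  simp only [addRightEmbedding_apply]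
  omega

lemma card_filter_not_forall_le_cycleSubsets :
    ((cycleSubsets (m + h) h).filter (fun S => ¬ ∀ j ∈ S, j ≤ m)).card =
      h * pathTotal (m - h - 1) h := by
  have hcard :
      h * pathTotal (m - h - 1) h = (Icc 1 h ×ˢ pathSubsets (m - h - 1) h).card := by
    simp [pathTotal]
  rw [hcard, eq_comm]
  refine card_bij (fun p _ => insert (m + p.1) (p.2.map (addRightEmbedding p.1))) ?_ ?_ ?_
  · rintro ⟨t, T⟩ hp
    obtain ⟨ht, hT⟩ := mem_product.1 hp
    refine mem_filter.2 ⟨insert_map_mem_cycleSubsets m h ht hT, fun hle => ?_⟩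
    have := hle _ (mem_insert_self _ _)
    rw [mem_Icc] at ht
    omega
  · rintro ⟨t, T⟩ hp ⟨t', T'⟩ hp' heq
    simp only [mem_product, mem_Icc] at hp hp' heq
    obtain ⟨ht, hT⟩ := hp
    obtain ⟨ht', hT'⟩ := hp'
    have htt' : t = t' := by
      have hmem : m + t ∈ insert (m + t') (T'.map (addRightEmbedding t')) :=
        heq ▸ mem_insert_self _ _
      rcases mem_insert.1 hmem with hsame | hmem
      · omega
      · have := lt_of_mem_map_pathSubsets m h ht'.2 hT' hmem
        omega
    subst htt'
    have hnotin {U} (hU : U ∈ pathSubsets (m - h - 1) h) :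
        m + t ∉ U.map (addRightEmbedding t) :=
      fun hmem => (lt_of_mem_map_pathSubsets m h ht.2 hU hmem).not_ge (by omega)
    have := congrArg (·.erase (m + t)) heq
    simp only [erase_insert (hnotin hT), erase_insert (hnotin hT'), map_inj] at this
    rw [this]
  · intro S hS
    obtain ⟨hS, hgt⟩ := mem_filter.1 hS
    simp only [not_forall, not_le, exists_prop] at hgt
    obtain ⟨j, hj, hmj⟩ := hgt
    obtain ⟨T, hT, rfl⟩ := exists_eq_insert_map_of_mem_cycleSubsets m h hS hj hmj
    have := (mem_cycleSubsets.1 hS).1 j hj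
    refine ⟨(j - m, T), mem_product.2 ⟨mem_Icc.2 ⟨by omega, by omega⟩, hT⟩, ?_⟩
    rw [Nat.add_sub_cancel' hmj.le]

theorem cycleTotal_add :
    cycleTotal (m + h) h = pathTotal m h + h * pathTotal (m - h - 1) h := by
  rw [cycleTotal, ← card_filter_add_card_filter_not (p := fun S => ∀ j ∈ S, j ≤ m),
    filter_forall_le_cycleSubsets, card_filter_not_forall_le_cycleSubsets]
  rfl

end CycleDecomposition

theorem stmt16 (n h : ℕ) (hn : n > 2 * h + 1) :
    cycleTotal n h = cycleTotal (n - 1) h + cycleTotal (n - h - 1) h := by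
  obtain ⟨r, rfl⟩ : ∃ r, n = r + h + 2 + h := ⟨n - (2 * h + 2), by omega⟩
  rw [show r + h + 2 + h - 1 = r + h + 1 + h by omega,
    show r + h + 2 + h - h - 1 = r + 1 + h by omega,
    cycleTotal_add, cycleTotal_add, cycleTotal_add,
    show r + h + 2 - h - 1 = r + 1 by omega, show r + h + 1 - h - 1 = r by omega,
    show r + 1 - h - 1 = r - h by omega,
    pathTotal_succ (r + h + 1), show r + h + 1 - h = r + 1 by omega, pathTotal_succ r]
  ring
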